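/- arXiv:1308.6067 — 2 statements merged into one kernel-verified Lean document; each statement's English description precedes it below -/
import Mathlib

section
/- Let $n \geq 1$ and let $m, g_1, \ldots, g_n \in \mathbb{C}^d$ be $n+1$ orthonormal vectors. Let $\psi = \frac{1}{\sqrt{2}}\, m \otimes m + \frac{1}{\sqrt{2n}} \sum_{j=1}^n g_j \otimes g_j \in \mathbb{C}^d \otimes \mathbb{C}^d$, and let $\sigma = \frac{1}{2}|m \otimes m\rangle\langle m \otimes m| + \sum_{j=1}^n \frac{1}{2n}|g_j \otimes g_j\rangle\langle g_j \otimes g_j|$. Then $\langle\psi, \sigma\psi\rangle = \frac{1}{4} + \frac{1}{4n}$. -/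
/-!
Write `φ₀ = m ⊗ m` and `φⱼ = gⱼ ⊗ gⱼ`. Since `⟨a ⊗ a, b ⊗ b⟩ = ⟨a, b⟩²`, these vectors are again
orthonormal, so `ψ = φ₀/√2 + ∑ⱼ φⱼ/√(2n)` has overlaps `⟨φ₀, ψ⟩ = 1/√2` and `⟨φⱼ, ψ⟩ = 1/√(2n)`.
As `⟨ψ, |φ⟩⟨φ| ψ⟩ = |⟨φ, ψ⟩|²`, the acceptance probability is
`½ · ½ + n · (1/2n) · (1/2n) = 1/4 + 1/(4n)`.
-/

/-- Outer product `|ψ⟩⟨ψ|`. -/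
noncomputable def outer {n : Type*} (ψ : n → ℂ) : Matrix n n ℂ :=
  fun i j => ψ i * (starRingEnd ℂ) (ψ j)

open Matrix

section Outer

variable {N : Type*} [Fintype N]

lemma outer_mulVec (φ v : N → ℂ) : outer φ *ᵥ v = (star φ ⬝ᵥ v) • φ := by
  ext i
  simp [outer, mulVec, dotProduct, Finset.mul_sum, mul_comm, mul_left_comm]

lemma star_dotProduct_outer_mulVec (φ v : N → ℂ) :
    star v ⬝ᵥ (outer φ *ᵥ v) = Complex.normSq (star φ ⬝ᵥ v) := by
  rw [outer_mulVec, dotProduct_smul, star_dotProduct (v := v), smul_eq_mul, Complex.star_def,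
    Complex.mul_conj]

lemma star_dotProduct_sum_smul_outer_mulVec {ι : Type*} (s : Finset ι) (w : ι → ℝ)
    (φ : ι → N → ℂ) (v : N → ℂ) :
    star v ⬝ᵥ ((∑ i ∈ s, w i • outer (φ i)) *ᵥ v) =
      ∑ i ∈ s, w i * Complex.normSq (star (φ i) ⬝ᵥ v) := by
  simp [sum_mulVec, dotProduct_sum, smul_mulVec, star_dotProduct_outer_mulVec]

lemma star_dotProduct_self_eq_one {v : N → ℂ} (hv : ∑ i, Complex.normSq (v i) = 1) :
    star v ⬝ᵥ v = 1 := by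
  simp only [dotProduct, Pi.star_apply, Complex.star_def, ← Complex.normSq_eq_conj_mul_self]
  exact_mod_cast hv

end Outer

section Tensor

def tensorVec {α β R : Type*} [Mul R] (a : α → R) (b : β → R) : α × β → R :=
  fun x => a x.1 * b x.2

variable {α β R : Type*} [Fintype α] [Fintype β] [CommSemiring R] [StarRing R]

lemma star_tensorVec_dotProduct_tensorVec (a c : α → R) (b e : β → R) :
    star (tensorVec a b) ⬝ᵥ tensorVec c e = (star a ⬝ᵥ c) * (star b ⬝ᵥ e) := by
  simp only [dotProduct, Fintype.sum_prod_type, Finset.sum_mul_sum, tensorVec, Pi.star_apply,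
    star_mul']
  exact Finset.sum_congr rfl fun _ _ => Finset.sum_congr rfl fun _ _ => by ring

lemma star_tensorVec_self_dotProduct_add_sum {ι : Type*} [Fintype ι] (a m : α → R)
    (g : ι → α → R) (s t : R) :
    star (tensorVec a a) ⬝ᵥ (s • tensorVec m m + t • ∑ j, tensorVec (g j) (g j)) =
      s * (star a ⬝ᵥ m) ^ 2 + t * ∑ j, (star a ⬝ᵥ g j) ^ 2 := by
  simp [dotProduct_sum, star_tensorVec_dotProduct_tensorVec, sq]

end Tensor

lemma Complex.normSq_inv_sqrt {x : ℝ} (hx : 0 ≤ x) : Complex.normSq ((√x : ℂ))⁻¹ = x⁻¹ := by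
  rw [map_inv₀, Complex.normSq_ofReal, Real.mul_self_sqrt hx]

lemma mul_inv_two_mul_mul_inv_two_mul {K : Type*} [Field K] (x : K) :
    x * ((2 * x)⁻¹ * (2 * x)⁻¹) = (4 * x)⁻¹ := by
  rcases eq_or_ne x 0 with rfl | hx
  · simp
  · field_simp
    ring

theorem improved_sealing_acceptance_general
    {n d : ℕ}
    (m : Fin d → ℂ) (g : Fin n → Fin d → ℂ)
    (hm : ∑ i, Complex.normSq (m i) = 1)
    (hg : ∀ j, ∑ i, Complex.normSq (g j i) = 1)
    (hmg : ∀ j, ∑ i, (starRingEnd ℂ) (m i) * g j i = 0)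
    (hgg : ∀ j k, j ≠ k → ∑ i, (starRingEnd ℂ) (g j i) * g k i = 0)
    (ψ : Fin d × Fin d → ℂ)
    (hψ : ψ = fun x => ((Real.sqrt 2 : ℂ))⁻¹ * (m x.1 * m x.2) +
        ((Real.sqrt (2 * n) : ℂ))⁻¹ * ∑ j, g j x.1 * g j x.2)
    (σ : Matrix (Fin d × Fin d) (Fin d × Fin d) ℂ)
    (hσ : σ = ((1 : ℝ) / 2) • outer (fun x => m x.1 * m x.2) +
        ∑ j, ((1 : ℝ) / (2 * n)) • outer (fun x => g j x.1 * g j x.2)) :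
    ∑ x, (starRingEnd ℂ) (ψ x) * σ.mulVec ψ x = 1 / 4 + 1 / (4 * n) := by
  set s : ℂ := ((√2 : ℝ) : ℂ)⁻¹ with hs
  set t : ℂ := ((√(2 * n) : ℝ) : ℂ)⁻¹ with ht
  have hψ' : ψ = s • tensorVec m m + t • ∑ j, tensorVec (g j) (g j) := by
    ext x
    simp [hψ, tensorVec, Finset.sum_apply]
  have hgm (j : Fin n) : star (g j) ⬝ᵥ m = 0 := by
    rw [star_dotProduct, show star m ⬝ᵥ g j = 0 from hmg j, star_zero]
  have overlap_m : star (tensorVec m m) ⬝ᵥ ψ = s := by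
    rw [hψ', star_tensorVec_self_dotProduct_add_sum, star_dotProduct_self_eq_one hm]
    simp [show ∀ j, star m ⬝ᵥ g j = 0 from hmg]
  have overlap_g (j : Fin n) : star (tensorVec (g j) (g j)) ⬝ᵥ ψ = t := by
    rw [hψ', star_tensorVec_self_dotProduct_add_sum, hgm, Finset.sum_eq_single j
      (fun k _ hk => by rw [show star (g j) ⬝ᵥ g k = 0 from hgg j k hk.symm]; ring) (by simp),
      star_dotProduct_self_eq_one (hg j)]
    ring
  have hσ' : σ = (1 / 2 : ℝ) • outer (tensorVec m m) +
      ∑ j, (1 / (2 * n) : ℝ) • outer (tensorVec (g j) (g j)) := hσ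
  change star ψ ⬝ᵥ σ *ᵥ ψ = _
  rw [hσ', add_mulVec, dotProduct_add, smul_mulVec, dotProduct_smul, star_dotProduct_outer_mulVec,
    star_dotProduct_sum_smul_outer_mulVec]
  simp only [overlap_m, overlap_g, hs, ht, Complex.normSq_inv_sqrt zero_le_two,
    Complex.normSq_inv_sqrt (by positivity : (0 : ℝ) ≤ 2 * n), Finset.sum_const, Finset.card_univ,
    Fintype.card_fin, nsmul_eq_mul, Complex.real_smul]
  push_cast
  simp only [one_div, mul_inv_two_mul_mul_inv_two_mul]
  norm_num

theorem improved_sealing_acceptance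
    {n d : ℕ} (hn : 1 ≤ n)
    (m : Fin d → ℂ) (g : Fin n → Fin d → ℂ)
    (hm : ∑ i, Complex.normSq (m i) = 1)
    (hg : ∀ j, ∑ i, Complex.normSq (g j i) = 1)
    (hmg : ∀ j, ∑ i, (starRingEnd ℂ) (m i) * g j i = 0)
    (hgg : ∀ j k, j ≠ k → ∑ i, (starRingEnd ℂ) (g j i) * g k i = 0)
    (ψ : Fin d × Fin d → ℂ)
    (hψ : ψ = fun x => ((Real.sqrt 2 : ℂ))⁻¹ * (m x.1 * m x.2) +
        ((Real.sqrt (2 * n) : ℂ))⁻¹ * ∑ j, g j x.1 * g j x.2)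
    (σ : Matrix (Fin d × Fin d) (Fin d × Fin d) ℂ)
    (hσ : σ = ((1 : ℝ) / 2) • outer (fun x => m x.1 * m x.2) +
        ∑ j, ((1 : ℝ) / (2 * n)) • outer (fun x => g j x.1 * g j x.2)) :
    ∑ x, (starRingEnd ℂ) (ψ x) * σ.mulVec ψ x = 1 / 4 + 1 / (4 * n) :=
  improved_sealing_acceptance_general m g hm hg hmg hgg ψ hψ σ hσ
end

section
/- Let $n \geq 1$, let $e_1, \ldots, e_n \in \mathbb{C}^{d_B}$ be orthonormal vectors, and let $m_1, \ldots, m_n \in \mathbb{C}^{d_C}$ be unit vectors. Let $\psi = \frac{1}{\sqrt{n}} \sum_{i=1}^n e_i \otimes m_i \in \mathbb{C}^{d_B} \otimes \mathbb{C}^{d_C}$ (a unit vector). Then for every index $i \in \{1, \ldots, n\}$ and every density matrix $\rho$ on $\mathbb{C}^{d_C}$, $\langle\psi, (|e_i\rangle\langle e_i| \otimes \rho)\,\psi\rangle = \frac{1}{n}\langle m_i, \rho\, m_i\rangle \leq \frac{1}{n}$. -/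
/-!
Contracting `ψ` with `e i` on the first factor leaves `(1/√n) • m i`, by orthonormality of the
`e j`; hence the expectation of `|e i⟩⟨e i| ⊗ ρ` in `ψ` is `(1/n) ⟨m i, ρ m i⟩`. Writing
`ρ = Bᴴ B`, that inner product is `‖B (m i)‖² ≤ ‖B‖_F² ‖m i‖² = tr ρ = 1`.
-/

open scoped Kronecker ComplexOrder

open Matrix WithLp
open scoped Matrix.Norms.Frobenius

namespace Matrix

variable {𝕜 : Type*} [RCLike 𝕜] {m n : Type*} [Fintype m] [Fintype n]

theorem re_star_dotProduct_self (v : n → 𝕜) : RCLike.re (star v ⬝ᵥ v) = ‖toLp 2 v‖ ^ 2 := by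
  rw [← inner_self_eq_norm_sq (𝕜 := 𝕜), EuclideanSpace.inner_toLp_toLp, dotProduct_comm]

theorem re_trace_conjTranspose_mul_self_eq_frobenius_norm_sq (B : Matrix m n 𝕜) :
    RCLike.re (Bᴴ * B).trace = ‖B‖ ^ 2 := by
  rw [frobenius_norm_def, ← Real.sqrt_eq_rpow, Real.sq_sqrt (by positivity)]
  simp only [Real.rpow_two, trace, diag, mul_apply, conjTranspose_apply, RCLike.star_def,
    RCLike.conj_mul, map_sum, ← RCLike.ofReal_pow, RCLike.ofReal_re]
  rw [Finset.sum_comm]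

theorem frobenius_norm_mulVec_le (B : Matrix m n 𝕜) (v : n → 𝕜) :
    ‖toLp 2 (B *ᵥ v)‖ ≤ ‖B‖ * ‖toLp 2 v‖ := by
  simpa only [← frobenius_norm_replicateCol (ι := Unit), replicateCol_mulVec] using
    frobenius_norm_mul B (replicateCol Unit v)

theorem PosSemidef.re_star_dotProduct_mulVec_le {A : Matrix n n 𝕜} (hA : A.PosSemidef)
    (v : n → 𝕜) :
    RCLike.re (star v ⬝ᵥ (A *ᵥ v)) ≤ RCLike.re A.trace * RCLike.re (star v ⬝ᵥ v) := by
  obtain ⟨B, rfl⟩ : ∃ B : Matrix n n 𝕜, A = Bᴴ * B := by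
    classical
    open scoped MatrixOrder Matrix.Norms.L2Operator in
    exact CStarAlgebra.nonneg_iff_eq_star_mul_self.mp hA.nonneg
  have hquad : star v ⬝ᵥ ((Bᴴ * B) *ᵥ v) = star (B *ᵥ v) ⬝ᵥ (B *ᵥ v) := by
    rw [← mulVec_mulVec, dotProduct_mulVec, star_mulVec]
  rw [hquad, re_star_dotProduct_self, re_star_dotProduct_self,
    re_trace_conjTranspose_mul_self_eq_frobenius_norm_sq, ← mul_pow]
  exact pow_le_pow_left₀ (norm_nonneg _) (frobenius_norm_mulVec_le B v) 2

end Matrix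

section PartialInner

variable {ι β γ : Type*} [Fintype ι] [Fintype β]

/-- `(⟨u| ⊗ 1) ψ`. -/
def partialInner (u : β → ℂ) (ψ : β × γ → ℂ) : γ → ℂ :=
  fun c => star u ⬝ᵥ fun b => ψ (b, c)

theorem star_dotProduct_self_eq_sum_normSq (v : β → ℂ) :
    star v ⬝ᵥ v = ((∑ b, Complex.normSq (v b) : ℝ) : ℂ) := by
  simp [dotProduct, Complex.normSq_eq_conj_mul_self]

theorem partialInner_smul_sum_of_orthonormal [DecidableEq ι] {e : ι → β → ℂ}
    (he : ∀ i j, star (e i) ⬝ᵥ e j = if i = j then 1 else 0) (m : ι → γ → ℂ) (s : ℂ) (i : ι) :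
    partialInner (e i) (fun x => s * ∑ j, e j x.1 * m j x.2) = s • m i := by
  ext c
  have hcollapse : ∑ j, (star (e i) ⬝ᵥ e j) * m j c = m i c := by simp [he]
  simp only [partialInner, dotProduct, Pi.smul_apply, smul_eq_mul, ← hcollapse, Finset.mul_sum,
    Finset.sum_mul]
  rw [Finset.sum_comm]
  exact Finset.sum_congr rfl fun _ _ => Finset.sum_congr rfl fun _ _ => by ring

variable [Fintype γ]

theorem kronecker_outer_mulVec_apply (u : β → ℂ) (ρ : Matrix γ γ ℂ) (ψ : β × γ → ℂ)
    (b : β) (c : γ) :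
    ((outer u ⊗ₖ ρ) *ᵥ ψ) (b, c) = u b * (ρ *ᵥ partialInner u ψ) c := by
  simp only [mulVec, dotProduct, partialInner, outer, kroneckerMap_apply, Fintype.sum_prod_type,
    Pi.star_apply, Complex.star_def, Finset.mul_sum]
  rw [Finset.sum_comm]
  exact Finset.sum_congr rfl fun _ _ => Finset.sum_congr rfl fun _ _ => by ring

theorem star_dotProduct_kronecker_outer_mulVec (u : β → ℂ) (ρ : Matrix γ γ ℂ)
    (ψ : β × γ → ℂ) :
    star ψ ⬝ᵥ ((outer u ⊗ₖ ρ) *ᵥ ψ) = star (partialInner u ψ) ⬝ᵥ (ρ *ᵥ partialInner u ψ) := by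
  simp only [dotProduct, Fintype.sum_prod_type, kronecker_outer_mulVec_apply, partialInner,
    Pi.star_apply, star_sum, star_mul', star_star, Finset.sum_mul]
  rw [Finset.sum_comm]
  exact Finset.sum_congr rfl fun _ _ => Finset.sum_congr rfl fun _ _ => by ring

end PartialInner

theorem multiple_pictures_security_general
    {n dB dC : ℕ}
    (e : Fin n → Fin dB → ℂ)
    (he : ∀ i, ∑ b, Complex.normSq (e i b) = 1)
    (heo : ∀ i j, i ≠ j → ∑ b, (starRingEnd ℂ) (e i b) * e j b = 0)
    (m : Fin n → Fin dC → ℂ)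
    (hm : ∀ i, ∑ c, Complex.normSq (m i c) = 1)
    (ψ : Fin dB × Fin dC → ℂ)
    (hψ : ψ = fun x => ((Real.sqrt n : ℂ))⁻¹ * ∑ i, e i x.1 * m i x.2)
    (i : Fin n)
    (ρ : Matrix (Fin dC) (Fin dC) ℂ)
    (hρ : ρ.PosSemidef) (hρtr : ρ.trace = 1) :
    (∑ x, (starRingEnd ℂ) (ψ x) * ((outer (e i) ⊗ₖ ρ).mulVec ψ) x) =
        ((n : ℂ))⁻¹ * ∑ c, (starRingEnd ℂ) (m i c) * ρ.mulVec (m i) c ∧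
      (∑ x, (starRingEnd ℂ) (ψ x) * ((outer (e i) ⊗ₖ ρ).mulVec ψ) x).re ≤ 1 / n := by
  have horth : ∀ i j, star (e i) ⬝ᵥ e j = if i = j then 1 else 0 := by
    intro i j
    split_ifs with hij
    · rw [hij, star_dotProduct_self_eq_sum_normSq, he, Complex.ofReal_one]
    · exact heo i j hij
  have hm_unit : star (m i) ⬝ᵥ m i = 1 := by
    rw [star_dotProduct_self_eq_sum_normSq, hm, Complex.ofReal_one]
  have hcontract : partialInner (e i) ψ = ((Real.sqrt n : ℂ))⁻¹ • m i :=
    hψ ▸ partialInner_smul_sum_of_orthonormal horth m _ i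
  have hscale : star ((Real.sqrt n : ℂ))⁻¹ * ((Real.sqrt n : ℂ))⁻¹ = (n : ℂ)⁻¹ := by
    rw [star_inv₀, Complex.star_def, Complex.conj_ofReal, ← mul_inv, ← Complex.ofReal_mul,
      Real.mul_self_sqrt n.cast_nonneg, Complex.ofReal_natCast]
  have hvalue : star ψ ⬝ᵥ ((outer (e i) ⊗ₖ ρ) *ᵥ ψ) = (n : ℂ)⁻¹ * (star (m i) ⬝ᵥ (ρ *ᵥ m i)) := by
    rw [star_dotProduct_kronecker_outer_mulVec, hcontract, star_smul, mulVec_smul,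
      smul_dotProduct, dotProduct_smul, smul_smul, hscale, smul_eq_mul]
  refine ⟨hvalue, ?_⟩
  change RCLike.re (star ψ ⬝ᵥ ((outer (e i) ⊗ₖ ρ) *ᵥ ψ)) ≤ _
  calc RCLike.re (star ψ ⬝ᵥ ((outer (e i) ⊗ₖ ρ) *ᵥ ψ))
      = (n : ℝ)⁻¹ * RCLike.re (star (m i) ⬝ᵥ (ρ *ᵥ m i)) := by
        rw [hvalue, ← Complex.ofReal_natCast, ← Complex.ofReal_inv]
        exact Complex.re_ofReal_mul _ _
    _ ≤ (n : ℝ)⁻¹ * (RCLike.re ρ.trace * RCLike.re (star (m i) ⬝ᵥ m i)) := by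
        gcongr
        exact hρ.re_star_dotProduct_mulVec_le (m i)
    _ = 1 / n := by rw [hρtr, hm_unit]; simp

theorem multiple_pictures_security
    {n dB dC : ℕ} (hn : 1 ≤ n)
    (e : Fin n → Fin dB → ℂ)
    (he : ∀ i, ∑ b, Complex.normSq (e i b) = 1)
    (heo : ∀ i j, i ≠ j → ∑ b, (starRingEnd ℂ) (e i b) * e j b = 0)
    (m : Fin n → Fin dC → ℂ)
    (hm : ∀ i, ∑ c, Complex.normSq (m i c) = 1)
    (ψ : Fin dB × Fin dC → ℂ)
    (hψ : ψ = fun x => ((Real.sqrt n : ℂ))⁻¹ * ∑ i, e i x.1 * m i x.2)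
    (i : Fin n)
    (ρ : Matrix (Fin dC) (Fin dC) ℂ)
    (hρ : ρ.PosSemidef) (hρtr : ρ.trace = 1) :
    (∑ x, (starRingEnd ℂ) (ψ x) * ((outer (e i) ⊗ₖ ρ).mulVec ψ) x) =
        ((n : ℂ))⁻¹ * ∑ c, (starRingEnd ℂ) (m i c) * ρ.mulVec (m i) c ∧
      (∑ x, (starRingEnd ℂ) (ψ x) * ((outer (e i) ⊗ₖ ρ).mulVec ψ) x).re ≤ 1 / n :=
  multiple_pictures_security_general e he heo m hm ψ hψ i ρ hρ hρtr
end
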